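/- In the DLC execution, if agent a_i is the globally highest-priority agent that has not yet finished its path, then a_i is the head of the queue Q_v of its next vertex v, and therefore advances at the current step. -/

import Mathlib

theorem List.Pairwise.head?_eq_some_of_forall_not_lt {α : Type*} [PartialOrder α]
    {l : List α} {a : α} (hl : l.Pairwise (· ≤ ·)) (ha : a ∈ l)
    (hmin : ∀ b ∈ l, ¬ b < a) : l.head? = some a := by
  cases l with
  | nil => cases ha
  | cons b t =>
    have hba : b ≤ a := by
      rcases List.mem_cons.mp ha with rfl | hmem
      · exact le_rfl
      · exact List.rel_of_pairwise_cons hl hmem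
    have hab : b = a := hba.eq_of_not_lt (hmin b List.mem_cons_self)
    rw [List.head?_cons, hab]

/-- If agent `i` is the globally highest-priority unfinished agent (all higher-priority
agents `j < i` have consumed every queue entry), the queues list pending visits in
priority order, and `i` has a pending entry in the queue of its next vertex `v`, then
`i` is the head of `Q v` and therefore advances at the current step. -/
theorem highest_priority_heads_queue {V : Type*} (k : ℕ)
    (Q : V → List (Fin k))
    (hsorted : ∀ w, (Q w).Pairwise (· ≤ ·))
    (i : Fin k) (v : V)
    (hfinished : ∀ j, j < i → ∀ w, j ∉ Q w)
    (hpending : i ∈ Q v) :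
    (Q v).head? = some i :=
  (hsorted v).head?_eq_some_of_forall_not_lt hpending fun j hj hlt => hfinished j hlt v hj
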